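/- Let 0 < a ≤ 1/2, q(s) = (a/2)s² − s + 1 and s* = (1 − √(1 − 2a))/a. Set g(s) = q'(s) + (a/2)·q(s). Then: (1) for every s with q(s) ≠ 0, q(s + q(s)) − q(s) = g(s)·q(s), i.e. the divided difference q[s, s + q(s)] equals g(s); (2) g is strictly increasing on [0, s*]; (3) for all s ∈ [0, s*], −1 + a/2 ≤ g(s) ≤ q'(s*) ≤ 0, and g(s) < 0 for s ∈ [0, s*). In particular the Steffensen divided difference q[s, s + q(s)] is nonzero for every s ∈ [0, s*). -/

import Mathlib

/-!
Along `s ↦ s + q(s)` the exact quadratic expansion `q(s + h) - q(s) = h (q'(s) + (a/2) h)`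
with `h = q(s)` shows that the Steffensen divided difference is `g(s)`. Expanded,
`g(s) = (a²/4) s² + (a/2) s + a/2 - 1` is a parabola with vertex at `s = -1/a`, hence strictly
increasing on `[0, ∞)`, and at the root `s*` of `q` it equals `q'(s*) = -√(1 - 2a) ≤ 0`.
Since `q = (a/2)(s - s*)(s - (1 + √(1 - 2a))/a)` is positive left of `s*`, on `[0, s*)` the
divided difference is defined and equal to `g(s) < g(s*) ≤ 0`.
-/

open Set

noncomputable def adimQuad (a s : ℝ) : ℝ := a / 2 * s ^ 2 - s + 1

noncomputable def adimQuadRoot (a : ℝ) : ℝ := (1 - Real.sqrt (1 - 2 * a)) / a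

noncomputable def steffensenSlope (a s : ℝ) : ℝ := (a * s - 1) + a / 2 * adimQuad a s

section

variable {a : ℝ}

theorem hasDerivAt_adimQuad (a s : ℝ) : HasDerivAt (adimQuad a) (a * s - 1) s := by
  have h := (((hasDerivAt_pow 2 s).const_mul (a / 2)).sub (hasDerivAt_id' s)).add_const 1
  exact h.congr_deriv (by push_cast; ring)

theorem deriv_adimQuad (a s : ℝ) : deriv (adimQuad a) s = a * s - 1 :=
  (hasDerivAt_adimQuad a s).deriv

theorem adimQuad_add_sub (a s h : ℝ) :
    adimQuad a (s + h) - adimQuad a s = h * ((a * s - 1) + a / 2 * h) := by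
  unfold adimQuad; ring

theorem adimQuad_add_self_sub (a s : ℝ) :
    adimQuad a (s + adimQuad a s) - adimQuad a s = steffensenSlope a s * adimQuad a s := by
  rw [adimQuad_add_sub, steffensenSlope]; ring

theorem divided_difference_adimQuad_add_self {s : ℝ} (hs : adimQuad a s ≠ 0) :
    (adimQuad a (s + adimQuad a s) - adimQuad a s) / (s + adimQuad a s - s) =
      steffensenSlope a s := by
  rw [adimQuad_add_self_sub, add_sub_cancel_left, mul_div_cancel_right₀ _ hs]

theorem steffensenSlope_eq (a s : ℝ) :
    steffensenSlope a s = a ^ 2 / 4 * s ^ 2 + a / 2 * s + (a / 2 - 1) := by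
  unfold steffensenSlope adimQuad; ring

theorem strictMonoOn_steffensenSlope (ha : 0 < a) : StrictMonoOn (steffensenSlope a) (Ici 0) := by
  intro x (hx : 0 ≤ x) y (hy : 0 ≤ y) hxy
  have hdiff : steffensenSlope a y - steffensenSlope a x =
      (y - x) * (a ^ 2 / 4 * (x + y) + a / 2) := by
    rw [steffensenSlope_eq, steffensenSlope_eq]; ring
  have : 0 < (y - x) * (a ^ 2 / 4 * (x + y) + a / 2) := by
    apply mul_pos (sub_pos.mpr hxy); positivity
  linarith

theorem adimQuadRoot_nonneg (ha : 0 < a) : 0 ≤ adimQuadRoot a := by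
  have : Real.sqrt (1 - 2 * a) ≤ 1 := Real.sqrt_le_one.mpr (by linarith)
  unfold adimQuadRoot; apply div_nonneg <;> linarith

theorem mul_adimQuadRoot (ha : a ≠ 0) : a * adimQuadRoot a = 1 - Real.sqrt (1 - 2 * a) := by
  unfold adimQuadRoot; field_simp

theorem adimQuad_eq_mul (ha : 0 < a) (ha' : a ≤ 1 / 2) (s : ℝ) :
    adimQuad a s =
      a / 2 * (s - adimQuadRoot a) * (s - (1 + Real.sqrt (1 - 2 * a)) / a) := by
  have hr : Real.sqrt (1 - 2 * a) ^ 2 = 1 - 2 * a := Real.sq_sqrt (by linarith)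
  unfold adimQuad adimQuadRoot
  generalize Real.sqrt (1 - 2 * a) = r at hr ⊢
  field_simp
  linear_combination hr

theorem adimQuad_pos_of_lt_root (ha : 0 < a) (ha' : a ≤ 1 / 2) {s : ℝ}
    (hs : s < adimQuadRoot a) : 0 < adimQuad a s := by
  have hroots : adimQuadRoot a ≤ (1 + Real.sqrt (1 - 2 * a)) / a := by
    unfold adimQuadRoot
    gcongr
    linarith [Real.sqrt_nonneg (1 - 2 * a)]
  rw [adimQuad_eq_mul ha ha']
  have h1 : s - adimQuadRoot a < 0 := by linarith
  have h2 : s - (1 + Real.sqrt (1 - 2 * a)) / a < 0 := by linarith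
  have := mul_pos_of_neg_of_neg h1 h2
  rw [mul_assoc]; positivity

theorem adimQuad_adimQuadRoot (ha : 0 < a) (ha' : a ≤ 1 / 2) : adimQuad a (adimQuadRoot a) = 0 := by
  rw [adimQuad_eq_mul ha ha', sub_self, mul_zero, zero_mul]

theorem deriv_adimQuad_adimQuadRoot (ha : a ≠ 0) :
    deriv (adimQuad a) (adimQuadRoot a) = -Real.sqrt (1 - 2 * a) := by
  rw [deriv_adimQuad, mul_adimQuadRoot ha]; ring

theorem steffensenSlope_adimQuadRoot (ha : 0 < a) (ha' : a ≤ 1 / 2) :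
    steffensenSlope a (adimQuadRoot a) = deriv (adimQuad a) (adimQuadRoot a) := by
  rw [steffensenSlope, adimQuad_adimQuadRoot ha ha', deriv_adimQuad]; ring

end

/-- **The Steffensen divided difference of the adimensional quadratic.**
Let `0 < a ≤ 1/2`, `q(s) = (a/2)s² − s + 1`, `s* = (1 − √(1 − 2a))/a` and
`g(s) = q'(s) + (a/2)q(s)`.  Then:
(1) for every `s` with `q(s) ≠ 0`, `q(s + q(s)) − q(s) = g(s)·q(s)`, i.e. the divided
difference `q[s, s + q(s)] = (q(s + q(s)) − q(s))/((s + q(s)) − s)` equals `g(s)`;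
(2) `g` is strictly increasing on `[0, s*]`;
(3) for all `s ∈ [0, s*]`, `−1 + a/2 ≤ g(s) ≤ q'(s*) ≤ 0`, and `g(s) < 0` for
`s ∈ [0, s*)`.  In particular the Steffensen divided difference `q[s, s + q(s)]` is
nonzero for every `s ∈ [0, s*)`. -/
theorem stmt_9 (a : ℝ) (ha : 0 < a) (ha' : a ≤ 1 / 2)
    (q : ℝ → ℝ) (hq : q = fun s => a / 2 * s ^ 2 - s + 1)
    (sstar : ℝ) (hsstar : sstar = (1 - Real.sqrt (1 - 2 * a)) / a)
    (g : ℝ → ℝ) (hg : g = fun s => deriv q s + a / 2 * q s) :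
    (∀ s : ℝ, q s ≠ 0 → q (s + q s) - q s = g s * q s ∧
      (q (s + q s) - q s) / (s + q s - s) = g s) ∧
    StrictMonoOn g (Set.Icc 0 sstar) ∧
    (∀ s ∈ Set.Icc (0 : ℝ) sstar,
      -1 + a / 2 ≤ g s ∧ g s ≤ deriv q sstar ∧ deriv q sstar ≤ 0) ∧
    (∀ s ∈ Set.Ico (0 : ℝ) sstar, g s < 0) ∧
    (∀ s ∈ Set.Ico (0 : ℝ) sstar,
      (q (s + q s) - q s) / (s + q s - s) ≠ 0) := by
  obtain rfl : q = adimQuad a := hq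
  obtain rfl : sstar = adimQuadRoot a := hsstar
  obtain rfl : g = steffensenSlope a := by
    rw [hg]; ext s; rw [deriv_adimQuad, steffensenSlope]
  have hmono : StrictMonoOn (steffensenSlope a) (Icc 0 (adimQuadRoot a)) :=
    (strictMonoOn_steffensenSlope ha).mono Icc_subset_Ici_self
  have hroot := adimQuadRoot_nonneg ha
  have hslope_root := steffensenSlope_adimQuadRoot ha ha'
  have hderiv_root : deriv (adimQuad a) (adimQuadRoot a) ≤ 0 := by
    rw [deriv_adimQuad_adimQuadRoot ha.ne']; exact neg_nonpos.mpr (Real.sqrt_nonneg _)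
  have hneg : ∀ s ∈ Ico 0 (adimQuadRoot a), steffensenSlope a s < 0 := fun s hs =>
    (hmono (Ico_subset_Icc_self hs) ⟨hroot, le_rfl⟩ hs.2).trans_le (hslope_root ▸ hderiv_root)
  refine ⟨fun s hs => ⟨adimQuad_add_self_sub a s, divided_difference_adimQuad_add_self hs⟩,
    hmono, fun s hs => ⟨?_, ?_, hderiv_root⟩, hneg, fun s hs => ?_⟩
  · have := hmono.monotoneOn ⟨le_rfl, hroot⟩ hs hs.1
    rw [steffensenSlope_eq] at this; linarith
  · exact hslope_root ▸ hmono.monotoneOn hs ⟨hroot, le_rfl⟩ hs.2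
  · rw [divided_difference_adimQuad_add_self (adimQuad_pos_of_lt_root ha ha' hs.2).ne']
    exact (hneg s hs).ne
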